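/- arXiv:math/0207037 — 2 statements merged into one kernel-verified Lean document; each statement's English description precedes it below -/
import Mathlib

section
/- Let X_A, X_B, X_C be sets, let R_A ⊆ FreeGroup X_A and R_B ⊆ FreeGroup X_B be sets of relators, and let A = PresentedGroup R_A and B = PresentedGroup R_B with quotient maps π_A : FreeGroup X_A → A and π_B : FreeGroup X_B → B. Let C be a group, g : X_C → C a function whose image generates C, and i : C → A, j : C → B group homomorphisms. Suppose ī : X_C → FreeGroup X_A and j̄ : X_C → FreeGroup X_B are functions with π_A(ī(x)) = i(g(x)) and π_B(j̄(x)) = j(g(x)) for all x ∈ X_C. Let incA : FreeGroup X_A → FreeGroup (X_A ⊕ X_B) and incB : FreeGroup X_B → FreeGroup (X_A ⊕ X_B) be the homomorphisms induced by the two coprojections of generating sets, and let P = PresentedGroup S where S = incA '' R_A ∪ incB '' R_B ∪ { incA(ī(x)) * (incB(j̄(x)))⁻¹ : x ∈ X_C }. Then the pushout G of i and j in the category of groups (the colimit with canonical maps i' : A → G, j' : B → G satisfying i' ∘ i = j' ∘ j) is isomorphic to P, via an isomorphism under which i' corresponds to the homomorphism A → P induced by incA on generators and j' corresponds to the homomorphism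 B → P induced by incB on generators. -/
/-- The pushout of groups `A ←[i] C [j]→ B`, where `A` and `B` are presented
groups, is isomorphic to the presented group on the disjoint union of the generators, with
relators those of `A`, those of `B`, and the amalgamation relators `incA(ī x) * (incB (j̄ x))⁻¹`
for generators `x` of `C`; the iso is compatible with the canonical maps. -/
theorem pushout_iso_presentedGroup
    {X_A X_B X_C : Type} (R_A : Set (FreeGroup X_A)) (R_B : Set (FreeGroup X_B))
    {C : Type} [Group C] (g : X_C → C)
    (hg : Subgroup.closure (Set.range g) = ⊤)
    (i : C →* PresentedGroup R_A) (j : C →* PresentedGroup R_B)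
    (ibar : X_C → FreeGroup X_A) (jbar : X_C → FreeGroup X_B)
    (hibar : ∀ x : X_C, PresentedGroup.mk R_A (ibar x) = i (g x))
    (hjbar : ∀ x : X_C, PresentedGroup.mk R_B (jbar x) = j (g x))
    (incA : FreeGroup X_A →* FreeGroup (X_A ⊕ X_B))
    (incB : FreeGroup X_B →* FreeGroup (X_A ⊕ X_B))
    (hincA : incA = FreeGroup.lift (fun x => FreeGroup.of (Sum.inl x)))
    (hincB : incB = FreeGroup.lift (fun x => FreeGroup.of (Sum.inr x)))
    (S : Set (FreeGroup (X_A ⊕ X_B)))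
    (hS : S = incA '' R_A ∪ incB '' R_B ∪
      Set.range (fun x : X_C => incA (ibar x) * (incB (jbar x))⁻¹))
    -- the pushout `G` of `i` and `j`, given by its universal property
    (G : Type) [Group G]
    (i' : PresentedGroup R_A →* G) (j' : PresentedGroup R_B →* G)
    (hcomm : i'.comp i = j'.comp j)
    (hpush : ∀ (H : Type) [Group H] (f : PresentedGroup R_A →* H)
        (k : PresentedGroup R_B →* H), f.comp i = k.comp j →
        ∃! h : G →* H, h.comp i' = f ∧ h.comp j' = k)
    -- the homomorphisms `A → P` and `B → P` induced by `incA`, `incB` on generators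
    (φA : PresentedGroup R_A →* PresentedGroup S)
    (φB : PresentedGroup R_B →* PresentedGroup S)
    (hφA : φA.comp (PresentedGroup.mk R_A) = (PresentedGroup.mk S).comp incA)
    (hφB : φB.comp (PresentedGroup.mk R_B) = (PresentedGroup.mk S).comp incB) :
    ∃ e : G ≃* PresentedGroup S,
      e.toMonoidHom.comp i' = φA ∧ e.toMonoidHom.comp j' = φB := by
  -- `mk _` kills every relator
  have hmk1 : ∀ {X : Type} (R : Set (FreeGroup X)) (r : FreeGroup X), r ∈ R →
      PresentedGroup.mk R r = 1 := fun R r hr =>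
    (QuotientGroup.eq_one_iff r).mpr (Subgroup.subset_normalClosure hr)
  have hφA' : ∀ w, φA (PresentedGroup.mk R_A w) = PresentedGroup.mk S (incA w) :=
    fun w => DFunLike.congr_fun hφA w
  have hφB' : ∀ w, φB (PresentedGroup.mk R_B w) = PresentedGroup.mk S (incB w) :=
    fun w => DFunLike.congr_fun hφB w
  -- the cocone condition for φA, φB
  have hamalg : ∀ x : X_C, φA (i (g x)) = φB (j (g x)) := by
    intro x
    have h1 : PresentedGroup.mk S (incA (ibar x) * (incB (jbar x))⁻¹) = 1 := by
      apply hmk1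
      rw [hS]; exact Or.inr ⟨x, rfl⟩
    rw [map_mul, map_inv] at h1
    rw [← hibar, ← hjbar, hφA', hφB']
    exact eq_of_div_eq_one (by simpa [div_eq_mul_inv] using h1)
  have hcocone : φA.comp i = φB.comp j := by
    ext c
    have hc : c ∈ Subgroup.closure (Set.range g) := hg ▸ Subgroup.mem_top c
    induction hc using Subgroup.closure_induction with
    | mem y hy => obtain ⟨x, rfl⟩ := hy; simpa using hamalg x
    | one => simp
    | mul a b _ _ ha hb => simp only [MonoidHom.comp_apply, map_mul] at *; rw [ha, hb]
    | inv a _ ha => simp only [MonoidHom.comp_apply, map_inv] at *; rw [ha]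
  -- the map from `G` to the presented group
  obtain ⟨h, ⟨hhi, hhj⟩, _⟩ := hpush (PresentedGroup S) φA φB hcocone
  -- the map back: defined on generators
  set f : X_A ⊕ X_B → G := Sum.elim
      (fun a => i' (PresentedGroup.mk R_A (FreeGroup.of a)))
      (fun b => j' (PresentedGroup.mk R_B (FreeGroup.of b))) with hf
  have hliftA : ∀ w : FreeGroup X_A,
      FreeGroup.lift f (incA w) = i' (PresentedGroup.mk R_A w) := by
    intro w
    have : (FreeGroup.lift f).comp incA = i'.comp (PresentedGroup.mk R_A) := by
      rw [hincA]; ext a; simp [hf]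
    exact DFunLike.congr_fun this w
  have hliftB : ∀ w : FreeGroup X_B,
      FreeGroup.lift f (incB w) = j' (PresentedGroup.mk R_B w) := by
    intro w
    have : (FreeGroup.lift f).comp incB = j'.comp (PresentedGroup.mk R_B) := by
      rw [hincB]; ext b; simp [hf]
    exact DFunLike.congr_fun this w
  have hrels : ∀ r ∈ S, FreeGroup.lift f r = 1 := by
    intro r hr
    rw [hS] at hr
    rcases hr with (⟨r', hr', rfl⟩ | ⟨r', hr', rfl⟩) | ⟨x, rfl⟩
    · rw [hliftA, hmk1 _ _ hr', map_one]
    · rw [hliftB, hmk1 _ _ hr', map_one]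
    · simp only [map_mul, map_inv, hliftA, hliftB, hibar, hjbar]
      have hx := DFunLike.congr_fun hcomm (g x)
      simp only [MonoidHom.comp_apply] at hx
      rw [hx, mul_inv_cancel]
  set k : PresentedGroup S →* G := PresentedGroup.toGroup hrels with hk
  have hkmk : ∀ w, k (PresentedGroup.mk S w) = FreeGroup.lift f w := fun _ => rfl
  have hkA : k.comp φA = i' := by
    refine MonoidHom.ext fun a => ?_
    obtain ⟨w, rfl⟩ := PresentedGroup.mk_surjective R_A a
    rw [MonoidHom.comp_apply, hφA', hkmk, hliftA]
  have hkB : k.comp φB = j' := by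
    refine MonoidHom.ext fun b => ?_
    obtain ⟨w, rfl⟩ := PresentedGroup.mk_surjective R_B b
    rw [MonoidHom.comp_apply, hφB', hkmk, hliftB]
  -- k ∘ h = id by uniqueness of the pushout map
  obtain ⟨u, _, huniq⟩ := hpush G i' j' hcomm
  have hkh : k.comp h = MonoidHom.id G := by
    have e1 : k.comp h = u := huniq _ ⟨by
        rw [MonoidHom.comp_assoc, hhi, hkA], by
        rw [MonoidHom.comp_assoc, hhj, hkB]⟩
    have e2 : MonoidHom.id G = u := huniq _ ⟨MonoidHom.id_comp i', MonoidHom.id_comp j'⟩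
    rw [e1, e2]
  -- h ∘ k = id on generators of the presented group
  have hhk : h.comp k = MonoidHom.id (PresentedGroup S) := by
    refine PresentedGroup.ext fun x => ?_
    cases x with
    | inl a =>
      have : k (PresentedGroup.of (Sum.inl a) : PresentedGroup S)
          = i' (PresentedGroup.mk R_A (FreeGroup.of a)) := PresentedGroup.toGroup.of hrels
      simp only [MonoidHom.comp_apply, MonoidHom.id_apply, this]
      have := DFunLike.congr_fun hhi (PresentedGroup.mk R_A (FreeGroup.of a))
      simp only [MonoidHom.comp_apply] at this
      rw [this, hφA', hincA]
      simp [PresentedGroup.of, PresentedGroup.mk]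
    | inr b =>
      have : k (PresentedGroup.of (Sum.inr b) : PresentedGroup S)
          = j' (PresentedGroup.mk R_B (FreeGroup.of b)) := PresentedGroup.toGroup.of hrels
      simp only [MonoidHom.comp_apply, MonoidHom.id_apply, this]
      have := DFunLike.congr_fun hhj (PresentedGroup.mk R_B (FreeGroup.of b))
      simp only [MonoidHom.comp_apply] at this
      rw [this, hφB', hincB]
      simp [PresentedGroup.of, PresentedGroup.mk]
  refine ⟨h.toMulEquiv k hkh hhk, ?_, ?_⟩
  · exact MonoidHom.ext fun a => DFunLike.congr_fun hhi a
  · exact MonoidHom.ext fun b => DFunLike.congr_fun hhj b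
end

section
/- Let p be a positive integer and let L = PresentedGroup {c^p, z⁻¹ * c⁻¹ * z * c⁻¹} be the group presented on the two-element generating set {c, z} (e.g., c = FreeGroup.of true, z = FreeGroup.of false in FreeGroup Bool) with relators c^p and z⁻¹c⁻¹zc⁻¹. Let G = Multiplicative (ZMod p) (the cyclic group of order p), let A = B = ⊤ be the full subgroup of G, and let φ : A ≃* B be the isomorphism induced by inversion x ↦ x⁻¹. Then the HNN extension of G along φ (HNNExtension G ⊤ ⊤ φ) is isomorphic to L. -/
/-!
The assignments `ofAdd 1 ↦ c`, `t ↦ z` and `c ↦ ofAdd 1`, `z ↦ t` respect the defining relations: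
in the HNN extension conjugation by `t` inverts every element of `ℤ/n`, and in the presented group
conjugation by `z` inverts `c`, hence every power of `c`. Both composites fix the generators.
-/

namespace Multiplicative

variable {H : Type*} [Group H] {n : ℕ}

theorem zmod_monoidHom_ext {f g : Multiplicative (ZMod n) →* H}
    (h : f (ofAdd 1) = g (ofAdd 1)) : f = g := by
  refine MonoidHom.ext fun x => ?_
  have hx : x = ofAdd 1 ^ (ZMod.cast (toAdd x) : ℤ) := by
    rw [← ofAdd_zsmul, zsmul_one, ZMod.intCast_zmod_cast, ofAdd_toAdd]
  rw [hx, map_zpow, map_zpow, h]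

def zmodLift (c : H) (hc : c ^ n = 1) : Multiplicative (ZMod n) →* H :=
  AddMonoidHom.toMultiplicativeLeft <| ZMod.lift n
    ⟨zmultiplesHom (Additive H) (Additive.ofMul c), by
      simpa [← ofMul_zpow] using congrArg Additive.ofMul hc⟩

@[simp]
theorem zmodLift_ofAdd_one (c : H) (hc : c ^ n = 1) : zmodLift c hc (ofAdd 1) = c := by
  simpa [zmodLift] using
    congrArg Additive.toMul (ZMod.lift_coe n ⟨zmultiplesHom (Additive H) (Additive.ofMul c), _⟩ 1)

theorem conj_zmodLift_of_conj_eq_inv {c z : H} (hc : c ^ n = 1) (hz : z * c * z⁻¹ = c⁻¹)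
    (x : Multiplicative (ZMod n)) : z * zmodLift c hc x * z⁻¹ = (zmodLift c hc x)⁻¹ := by
  have : (MulAut.conj z).toMonoidHom.comp (zmodLift c hc) = (zmodLift c hc).comp invMonoidHom :=
    zmod_monoidHom_ext <| by simpa using hz
  simpa using DFunLike.congr_fun this x

end Multiplicative

theorem HNNExtension.t_mul_of_of_forall_eq_inv {G : Type*} [Group G]
    {φ : (⊤ : Subgroup G) ≃* (⊤ : Subgroup G)}
    (hφ : ∀ x : (⊤ : Subgroup G), (φ x : G) = (x : G)⁻¹) (g : G) :
    (t * of g : HNNExtension G ⊤ ⊤ φ) = of g⁻¹ * t := by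
  simpa [hφ] using t_mul_of (φ := φ) ⟨g, Subgroup.mem_top g⟩

def cyclicInvRels (n : ℕ) : Set (FreeGroup Bool) :=
  {FreeGroup.of true ^ n,
    (FreeGroup.of false)⁻¹ * (FreeGroup.of true)⁻¹ * FreeGroup.of false * (FreeGroup.of true)⁻¹}

section CyclicInversion

open HNNExtension Multiplicative

variable {n : ℕ}

local notation "c" => (PresentedGroup.of true : PresentedGroup (cyclicInvRels n))
local notation "z" => (PresentedGroup.of false : PresentedGroup (cyclicInvRels n))

theorem cyclicInvRels.of_true_pow_eq_one : c ^ n = 1 :=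
  PresentedGroup.one_of_mem (Set.mem_insert _ _)

theorem cyclicInvRels.conj_of_true_eq_inv : z * c * z⁻¹ = c⁻¹ := by
  have h : z⁻¹ * c⁻¹ * z * c⁻¹ = 1 := PresentedGroup.one_of_mem (Set.mem_insert_of_mem _ rfl)
  rw [mul_inv_eq_one] at h
  conv_lhs => rw [← h]
  group

variable {φ : (⊤ : Subgroup (Multiplicative (ZMod n))) ≃* (⊤ : Subgroup (Multiplicative (ZMod n)))}
  (hφ : ∀ x : (⊤ : Subgroup (Multiplicative (ZMod n))),
    (φ x : Multiplicative (ZMod n)) = (x : Multiplicative (ZMod n))⁻¹)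

def hnnToPresented :
    HNNExtension (Multiplicative (ZMod n)) ⊤ ⊤ φ →* PresentedGroup (cyclicInvRels n) :=
  lift (zmodLift c cyclicInvRels.of_true_pow_eq_one) z fun a => by
    rw [hφ, map_inv, ← conj_zmodLift_of_conj_eq_inv _ cyclicInvRels.conj_of_true_eq_inv,
      inv_mul_cancel_right]

def presentedToHNN :
    PresentedGroup (cyclicInvRels n) →* HNNExtension (Multiplicative (ZMod n)) ⊤ ⊤ φ :=
  PresentedGroup.toGroup (f := fun b => cond b (of (ofAdd 1)) t) <| by
    rintro r (rfl | rfl) <;>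
      simp only [map_mul, map_inv, map_pow, FreeGroup.lift_apply_of, cond_true, cond_false]
    · rw [← map_pow, ← ofAdd_nsmul, nsmul_one, ZMod.natCast_self, ofAdd_zero, map_one]
    · rw [← map_inv, mul_assoc t⁻¹, ← t_mul_of_of_forall_eq_inv hφ, inv_mul_cancel_left,
        ← map_mul, mul_inv_cancel, map_one]

@[simp]
theorem hnnToPresented_of_ofAdd_one : hnnToPresented hφ (of (ofAdd 1)) = c := by
  simp [hnnToPresented]

@[simp]
theorem hnnToPresented_t : hnnToPresented hφ t = z := lift_t ..

@[simp]
theorem presentedToHNN_of_true : presentedToHNN hφ c = of (ofAdd 1) :=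
  PresentedGroup.toGroup.of _

@[simp]
theorem presentedToHNN_of_false : presentedToHNN hφ z = t :=
  PresentedGroup.toGroup.of _

def hnnMulEquivPresented :
    HNNExtension (Multiplicative (ZMod n)) ⊤ ⊤ φ ≃* PresentedGroup (cyclicInvRels n) :=
  (hnnToPresented hφ).toMulEquiv (presentedToHNN hφ)
    (hom_ext (zmod_monoidHom_ext (by simp)) (by simp))
    (PresentedGroup.ext fun b => by cases b <;> simp)

end CyclicInversion

theorem hnn_cyclic_inv_iso_presented_general
    (p : ℕ)
    (φ : (⊤ : Subgroup (Multiplicative (ZMod p))) ≃*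
      (⊤ : Subgroup (Multiplicative (ZMod p))))
    (hφ : ∀ x : (⊤ : Subgroup (Multiplicative (ZMod p))),
      (φ x : Multiplicative (ZMod p)) = (x : Multiplicative (ZMod p))⁻¹) :
    Nonempty (HNNExtension (Multiplicative (ZMod p)) ⊤ ⊤ φ ≃*
      PresentedGroup
        ({FreeGroup.of true ^ p,
          (FreeGroup.of false)⁻¹ * (FreeGroup.of true)⁻¹ * FreeGroup.of false *
            (FreeGroup.of true)⁻¹} : Set (FreeGroup Bool))) :=
  ⟨hnnMulEquivPresented hφ⟩

/-- STATEMENT 14: For `p > 0`, the HNN extension of the cyclic group `C_p` (written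
multiplicatively as `Multiplicative (ZMod p)`) along the inversion isomorphism `x ↦ x⁻¹`
(of the full subgroup `⊤`) is isomorphic to the group
`L = ⟨c, z | cᵖ, z⁻¹c⁻¹zc⁻¹⟩`, where `c = FreeGroup.of true`, `z = FreeGroup.of false`. -/
theorem hnn_cyclic_inv_iso_presented
    (p : ℕ) (hp : 0 < p)
    (φ : (⊤ : Subgroup (Multiplicative (ZMod p))) ≃*
      (⊤ : Subgroup (Multiplicative (ZMod p))))
    (hφ : ∀ x : (⊤ : Subgroup (Multiplicative (ZMod p))),
      (φ x : Multiplicative (ZMod p)) = (x : Multiplicative (ZMod p))⁻¹) :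
    Nonempty (HNNExtension (Multiplicative (ZMod p)) ⊤ ⊤ φ ≃*
      PresentedGroup
        ({FreeGroup.of true ^ p,
          (FreeGroup.of false)⁻¹ * (FreeGroup.of true)⁻¹ * FreeGroup.of false *
            (FreeGroup.of true)⁻¹} : Set (FreeGroup Bool))) :=
  hnn_cyclic_inv_iso_presented_general p φ hφ
end
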